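/- arXiv:2303.00368 — 6 statements merged into one kernel-verified Lean document; each statement's English description precedes it below -/
import Mathlib

section
/- For each k = m,…,1 and each f_k ∈ ℂ[t,Δ_1,…,Δ_k], the product F_k = ∏_{j=1}^{e_k} f_k(t,Δ_1,…,Δ_{k−1}, γ_k^j·Δ_k), viewed as a polynomial in Δ_k, has nonzero coefficients only in degrees divisible by e_k; consequently f_{k−1}, the remainder of F_k upon division by E_k with respect to the variable Δ_k, lies in ℂ[t,Δ_1,…,Δ_{k−1}]. -/
/-!
Substituting `Δ_k ↦ γ·Δ_k` multiplies the coefficient of a monomial `μ` by `γ ^ μ_k`. For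
`γ = γ_k` it permutes the factors of `F_k` cyclically, so it fixes `F_k`, and as `γ_k` is a
primitive `e_k`-th root of unity only exponents with `e_k ∣ μ_k` survive. The remainder then
replaces each `Δ_k ^ μ_k` by `g_k ^ (μ_k / e_k)`, which does not involve `Δ_k`.
-/

open MvPolynomial
open scoped NNRat

noncomputable section
namespace Radical

variable {m : ℕ} {R : Type*} [CommRing R] [Algebra ℂ R]

/-- The algebra endomorphism of `ℂ[t,Δ₁,…,Δ_m]` (variable `0` is `t`, variable
`i.succ` is `Δ_{i+1}`) substituting `X v ↦ c · X v` and fixing the other variables. -/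
def conjVar (v : Fin (m+1)) (c : ℂ) :
    MvPolynomial (Fin (m+1)) R →ₐ[R] MvPolynomial (Fin (m+1)) R :=
  aeval fun u => if u = v then C (algebraMap ℂ R c) * X v else X u

/-- The remainder of `F` upon division by `X v ^ e - gk` with respect to the variable `v`
(assuming `gk` does not involve `v`): each occurrence of `(X v)^d` is replaced by
`gk^(d / e) * (X v)^(d % e)`. -/
def remE (v : Fin (m+1)) (e : ℕ) (gk F : MvPolynomial (Fin (m+1)) R) :
    MvPolynomial (Fin (m+1)) R :=
  (AddMonoidAlgebra.coeff F).sum fun μ c => (C c * gk ^ (μ v / e)) * monomial (μ.update v (μ v % e)) 1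

/-- `γ_k = exp(2πi/e_k)`. -/
def root (ek : ℕ) : ℂ := Complex.exp (2 * Real.pi * Complex.I / ek)

/-- `F_k = ∏_{j=1}^{e_k} f(t,Δ₁,…,Δ_{k-1},γ_k^j·Δ_k)` (here `k : Fin m` is the 0-based
index, the variable of `Δ_{k+1}` being `k.succ`). -/
def conjProd (e : Fin m → ℕ) (k : Fin m) (f : MvPolynomial (Fin (m+1)) R) :
    MvPolynomial (Fin (m+1)) R :=
  ∏ j ∈ Finset.range (e k), conjVar k.succ (root (e k) ^ (j+1)) f

/-- One step of the normalized-remainder recursion: from `f_{k+1}` to `f_k`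
(0-based `k : Fin m`): the remainder of `F_{k+1}` upon division by `E_{k+1}` w.r.t. `Δ_{k+1}`. -/
def step (e : Fin m → ℕ) (g : Fin m → MvPolynomial (Fin (m+1)) R) (k : Fin m)
    (f : MvPolynomial (Fin (m+1)) R) : MvPolynomial (Fin (m+1)) R :=
  remE k.succ (e k) (g k) (conjProd e k f)

/-- `seqAux e g f j = f_{m-j}` in the normalized-remainder recursion starting at `f_m = f`. -/
def seqAux (e : Fin m → ℕ) (g : Fin m → MvPolynomial (Fin (m+1)) R)
    (f : MvPolynomial (Fin (m+1)) R) : ℕ → MvPolynomial (Fin (m+1)) R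
  | 0 => f
  | j+1 => if h : j < m then step e g ⟨m - 1 - j, by omega⟩ (seqAux e g f j) else seqAux e g f j

/-- The normalized remainder `R(f) = f₀`. -/
def Rnorm (e : Fin m → ℕ) (g : Fin m → MvPolynomial (Fin (m+1)) R)
    (f : MvPolynomial (Fin (m+1)) R) : MvPolynomial (Fin (m+1)) R :=
  seqAux e g f m

/-- `E_{i+1} = Δ_{i+1}^{e_{i+1}} - g_{i+1}` (0-based `i : Fin m`). -/
def Epoly (e : Fin m → ℕ) (g : Fin m → MvPolynomial (Fin (m+1)) R) (i : Fin m) :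
    MvPolynomial (Fin (m+1)) R :=
  X i.succ ^ e i - g i

/-- `p` is in normal form w.r.t. `{E₁,…,E_m}` (i.e. `N(p) = p`): no `Δ_i^{e_i}` can be
substituted, that is `deg_{Δ_i} p < e_i` for all `i`. -/
def IsNormalForm (e : Fin m → ℕ) (p : MvPolynomial (Fin (m+1)) R) : Prop :=
  ∀ i : Fin m, degreeOf i.succ p < e i

/-- `f` is guilty : `deg(f)·e₁⋯e_m > deg_t(R(f))`. -/
def Guilty (e : Fin m → ℕ) (g : Fin m → MvPolynomial (Fin (m+1)) ℂ)
    (w : Fin (m+1) → ℚ≥0) (f : MvPolynomial (Fin (m+1)) ℂ) : Prop :=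
  ((degreeOf 0 (Rnorm e g f) : ℚ≥0)) < weightedTotalDegree w f * ∏ i, (e i : ℚ≥0)

/-- The set of exponents of the monomials in the homogeneous component of highest
weighted degree of `f`. -/
def leadSupport (w : Fin (m+1) → ℚ≥0) (f : MvPolynomial (Fin (m+1)) ℂ) :
    Finset (Fin (m+1) →₀ ℕ) :=
  f.support.filter fun μ => Finsupp.weight w μ = weightedTotalDegree w f

/-- Auxiliary fuelled version of `Suspicious` (fuel `m` always suffices, since `g i` only
involves the variables `t, Δ₁, …, Δ_i`). -/
def SuspAux (g : Fin m → MvPolynomial (Fin (m+1)) ℂ) (w : Fin (m+1) → ℚ≥0) :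
    ℕ → MvPolynomial (Fin (m+1)) ℂ → Prop
  | 0, f => 1 < (leadSupport w f).card
  | b+1, f => 1 < (leadSupport w f).card ∨
      ∃ i : Fin m, (∃ μ ∈ leadSupport w f, μ i.succ ≠ 0) ∧ SuspAux g w b (g i)

/-- `f` is suspicious: either its homogeneous component of highest weighted degree has at
least two terms, or some `Δ_i` appears in its unique leading term and `g_i` is suspicious. -/
def Suspicious (g : Fin m → MvPolynomial (Fin (m+1)) ℂ) (w : Fin (m+1) → ℚ≥0)
    (f : MvPolynomial (Fin (m+1)) ℂ) : Prop :=
  SuspAux g w m f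

/-- A subset of `ℂⁿ` is Zariski closed if it is the common zero locus of a family of
polynomials. -/
def IsZariskiClosed {n : ℕ} (S : Set (Fin n → ℂ)) : Prop :=
  ∃ T : Set (MvPolynomial (Fin n) ℂ), S = {x | ∀ p ∈ T, eval x p = 0}

/-- The image set `X(P)` of the radical parametrization `P = (p₁/q₁,…,p_n/q_n)`. -/
def ImageSet {n : ℕ} (e : Fin m → ℕ) (g : Fin m → MvPolynomial (Fin (m+1)) ℂ)
    (p q : Fin n → MvPolynomial (Fin (m+1)) ℂ) : Set (Fin n → ℂ) :=
  {x | ∃ a : Fin (m+1) → ℂ, (∀ i, eval a (Epoly e g i) = 0) ∧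
        (∀ i, eval a (q i) ≠ 0) ∧ ∀ i, eval a (p i) / eval a (q i) = x i}

lemma conjVar_monomial (v : Fin (m+1)) (c : ℂ) (s : Fin (m+1) →₀ ℕ) (a : R) :
    conjVar v c (monomial s a) = monomial s (algebraMap ℂ R c ^ s v * a) := by
  have hX : ∀ u,
      (if u = v then C (algebraMap ℂ R c) * X v else X u : MvPolynomial (Fin (m+1)) R) =
        (if u = v then C (algebraMap ℂ R c) else 1) * X u := by
    intro u; split_ifs with h <;> simp [h]
  simp only [conjVar, aeval_monomial, hX, mul_pow, Finsupp.prod_mul]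
  rw [Finsupp.prod_pow, Fintype.prod_eq_single v (fun u hu => by simp [hu])]
  simp only [algebraMap_eq, ↓reduceIte, Finsupp.prod_pow, monomial_eq, C_mul, C_pow]
  ring

lemma coeff_conjVar (v : Fin (m+1)) (c : ℂ) (f : MvPolynomial (Fin (m+1)) R)
    (μ : Fin (m+1) →₀ ℕ) :
    coeff μ (conjVar v c f) = algebraMap ℂ R c ^ μ v * coeff μ f := by
  induction f using MvPolynomial.induction_on' with
  | monomial s a =>
    rw [conjVar_monomial, coeff_monomial, coeff_monomial]
    split_ifs with h <;> simp [h]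
  | add p q hp hq => rw [map_add, coeff_add, coeff_add, hp, hq, mul_add]

lemma conjVar_conjVar (v : Fin (m+1)) (c d : ℂ) (f : MvPolynomial (Fin (m+1)) R) :
    conjVar v c (conjVar v d f) = conjVar v (c * d) f := by
  ext μ
  simp only [coeff_conjVar, map_mul, mul_pow, mul_assoc]

lemma vars_conjVar_subset (v : Fin (m+1)) (c : ℂ) (f : MvPolynomial (Fin (m+1)) R) :
    (conjVar v c f).vars ⊆ f.vars := by
  intro u hu
  obtain ⟨μ, hμ, hu⟩ := (mem_vars_iff_mem_support u).mp hu
  refine (mem_vars_iff_mem_support u).mpr ⟨μ, ?_, hu⟩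
  rw [mem_support_iff, coeff_conjVar] at hμ
  exact mem_support_iff.mpr (right_ne_zero_of_mul hμ)

lemma conjVar_prod_range_conjVar_pow {γ : ℂ} {n : ℕ} (hγ : γ ^ n = 1) (v : Fin (m+1))
    (f : MvPolynomial (Fin (m+1)) R) :
    conjVar v γ (∏ j ∈ Finset.range n, conjVar v (γ ^ (j+1)) f)
      = ∏ j ∈ Finset.range n, conjVar v (γ ^ (j+1)) f := by
  cases n with
  | zero => simp
  | succ n =>
    simp only [map_prod, conjVar_conjVar, ← pow_succ']
    rw [Finset.prod_range_succ, pow_succ γ (n + 1), hγ, one_mul,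
      Finset.prod_range_succ' (fun j => conjVar v (γ ^ (j + 1)) f), zero_add, pow_one]

lemma dvd_of_mem_support_of_conjVar_eq {γ : ℂ} {n : ℕ} (hγ : IsPrimitiveRoot γ n)
    {v : Fin (m+1)} {F : MvPolynomial (Fin (m+1)) R} (hF : conjVar v γ F = F)
    {μ : Fin (m+1) →₀ ℕ} (hμ : μ ∈ F.support) : n ∣ μ v := by
  rw [← hγ.pow_eq_one_iff_dvd]
  by_contra hne
  have hunit : IsUnit (algebraMap ℂ R (γ ^ μ v - 1)) :=
    (Ne.isUnit (sub_ne_zero.mpr hne)).map _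
  have hfix := congrArg (coeff μ) hF
  rw [coeff_conjVar, ← sub_eq_zero, ← sub_one_mul, ← map_pow, ← map_one (algebraMap ℂ R),
    ← map_sub, hunit.mul_right_eq_zero] at hfix
  exact (mem_support_iff.mp hμ) hfix

lemma isPrimitiveRoot_root {n : ℕ} (hn : n ≠ 0) : IsPrimitiveRoot (root n) n :=
  Complex.isPrimitiveRoot_exp n hn

lemma dvd_of_mem_support_conjProd (e : Fin m → ℕ) (k : Fin m) (hk : e k ≠ 0)
    (f : MvPolynomial (Fin (m+1)) R) {μ : Fin (m+1) →₀ ℕ}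
    (hμ : μ ∈ (conjProd e k f).support) :
    e k ∣ μ k.succ :=
  dvd_of_mem_support_of_conjVar_eq (isPrimitiveRoot_root hk)
    (conjVar_prod_range_conjVar_pow (isPrimitiveRoot_root hk).pow_eq_one _ f) hμ

lemma vars_conjProd_subset (e : Fin m → ℕ) (k : Fin m) (f : MvPolynomial (Fin (m+1)) R) :
    (conjProd e k f).vars ⊆ f.vars :=
  (vars_prod _).trans <| Finset.biUnion_subset.mpr fun _ _ => vars_conjVar_subset _ _ f

lemma vars_remE_subset {S : Type*} [CommRing S] {v : Fin (m+1)} {e : ℕ}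
    {gk F : MvPolynomial (Fin (m+1)) S}
    (hF : ∀ μ ∈ F.support, e ∣ μ v) :
    (remE v e gk F).vars ⊆ F.vars.erase v ∪ gk.vars := by
  classical
  refine (vars_sum_subset _ _).trans <| Finset.biUnion_subset.mpr fun μ hμ => ?_
  dsimp only
  rw [Nat.mod_eq_zero_of_dvd (hF μ hμ)]
  refine (vars_mul _ _).trans (Finset.union_subset ?_ ?_)
  · refine (vars_mul _ _).trans (Finset.union_subset ?_ ?_)
    · simp only [vars_C, Finset.empty_subset]
    · exact (vars_pow _ _).trans Finset.subset_union_right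
  · refine Finset.subset_union_left.trans' fun u hu => ?_
    obtain ⟨d, hd, hu⟩ := (mem_vars_iff_mem_support u).mp hu
    rw [Finset.mem_singleton.mp (support_monomial_subset hd), Finsupp.support_update_zero] at hu
    exact Finset.erase_subset_erase v
      (fun w hw => (mem_vars_iff_mem_support w).mpr ⟨μ, hμ, hw⟩) hu

theorem stmt1_general
    (m : ℕ) (e : Fin m → ℕ) (he : ∀ i, 2 ≤ e i)
    (g : Fin m → MvPolynomial (Fin (m+1)) ℂ)
    (hgv : ∀ i : Fin m, ∀ v ∈ (g i).vars, (v : ℕ) ≤ (i : ℕ))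
    (k : Fin m) (f : MvPolynomial (Fin (m+1)) ℂ)
    (hf : ∀ v ∈ f.vars, (v : ℕ) ≤ (k : ℕ) + 1) :
    (∀ μ ∈ (conjProd e k f).support, e k ∣ μ k.succ) ∧
      (∀ v ∈ (remE k.succ (e k) (g k) (conjProd e k f)).vars, (v : ℕ) ≤ (k : ℕ)) := by
  have hdvd : ∀ μ ∈ (conjProd e k f).support, e k ∣ μ k.succ := fun μ hμ =>
    dvd_of_mem_support_conjProd e k (by have := he k; omega) f hμ
  refine ⟨hdvd, fun u hu => ?_⟩
  rcases Finset.mem_union.mp (vars_remE_subset hdvd hu) with hu | hu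
  · have hle := hf u (vars_conjProd_subset e k f (Finset.mem_of_mem_erase hu))
    have hne : (u : ℕ) ≠ k + 1 := fun h => Finset.ne_of_mem_erase hu (Fin.ext h)
    omega
  · exact hgv k u hu

/-- For `f_k ∈ ℂ[t,Δ₁,…,Δ_k]`, the product `F_k = ∏_{j=1}^{e_k} f_k(…, γ_k^j·Δ_k)`, viewed
as a polynomial in `Δ_k`, has nonzero coefficients only in degrees divisible by `e_k`;
consequently the remainder `f_{k-1}` of `F_k` upon division by `E_k` w.r.t. `Δ_k` lies in
`ℂ[t,Δ₁,…,Δ_{k-1}]`.  (Here `k : Fin m` is 0-based: `Δ_k` of the paper is the variable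
`k.succ`, so "`f ∈ ℂ[t,Δ₁,…,Δ_k]`" reads "all variables of `f` have index `≤ k+1`".) -/
theorem stmt1
    (m : ℕ) (hm : 1 ≤ m) (e : Fin m → ℕ) (he : ∀ i, 2 ≤ e i)
    (g : Fin m → MvPolynomial (Fin (m+1)) ℂ)
    (hgv : ∀ i : Fin m, ∀ v ∈ (g i).vars, (v : ℕ) ≤ (i : ℕ))
    (hgd : ∀ i j : Fin m, (j : ℕ) < (i : ℕ) → MvPolynomial.degreeOf j.succ (g i) < e j)
    (k : Fin m) (f : MvPolynomial (Fin (m+1)) ℂ)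
    (hf : ∀ v ∈ f.vars, (v : ℕ) ≤ (k : ℕ) + 1) :
    (∀ μ ∈ (conjProd e k f).support, e k ∣ μ k.succ) ∧
      (∀ v ∈ (remE k.succ (e k) (g k) (conjProd e k f)).vars, (v : ℕ) ≤ (k : ℕ)) :=
  stmt1_general m e he g hgv k f hf

end Radical
end
end

section
/- For every nonzero f ∈ ℂ[t,Δ_1,…,Δ_m], the degree of the normalized remainder satisfies deg_t(R(f)) ≤ deg(f)·e_1⋯e_m, where deg(f) is the weighted degree of f. -/
/-!
Weighted degree is subadditive on products and unchanged by rescaling a variable, so the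
product `F_k` of the `e_k` conjugates of `f_k` has weighted degree at most `e_k · deg f_k`.
Division by `E_k` replaces `Δ_k^{e_k}` by `g_k`, whose weighted degree is exactly
`e_k · deg Δ_k`, so it does not raise the weighted degree. Hence `deg R(f) ≤ e₁⋯e_m · deg f`,
and `deg_t ≤ deg` because `deg t = 1`.
-/

open MvPolynomial
open scoped NNRat

noncomputable section
namespace Finsupp

variable {σ M : Type*} [AddCommMonoid M] (w : σ → M)

lemma weight_eq_nsmul_add_weight_update_mod (v : σ) (e : ℕ) (μ : σ →₀ ℕ) :
    weight w μ = (μ v / e) • e • w v + weight w (μ.update v (μ v % e)) := by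
  conv_lhs => rw [← erase_add_single v μ, ← Nat.mod_add_div (μ v) e]
  rw [update_eq_erase_add_single, map_add, map_add, single_add, map_add, weight_single,
    weight_single, smul_smul, mul_comm]
  abel

variable [PartialOrder M] [IsOrderedAddMonoid M] [CanonicallyOrderedAdd M]

lemma apply_nsmul_le_weight (μ : σ →₀ ℕ) (s : σ) : μ s • w s ≤ weight w μ := by
  classical
  by_cases hs : s ∈ μ.support
  · rw [weight_apply, Finsupp.sum]
    exact Finset.single_le_sum (f := fun u => μ u • w u) (fun _ _ => zero_le) hs
  · rw [notMem_support_iff.1 hs, zero_smul]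
    exact zero_le

end Finsupp

namespace MvPolynomial

section WeightedTotalDegree

variable {σ τ R M : Type*} [CommSemiring R] [AddCommMonoid M] [SemilatticeSup M] [OrderBot M]
  (w : σ → M)

lemma weightedTotalDegree_le_iff {p : MvPolynomial σ R} {n : M} :
    weightedTotalDegree w p ≤ n ↔ ∀ μ ∈ p.support, Finsupp.weight w μ ≤ n :=
  Finset.sup_le_iff

lemma weightedTotalDegree_monomial_le (μ : σ →₀ ℕ) (a : R) :
    weightedTotalDegree w (monomial μ a) ≤ Finsupp.weight w μ :=
  (weightedTotalDegree_le_iff w).2 fun _ hν => by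
    rw [Finset.mem_singleton.1 (support_monomial_subset hν)]

lemma weightedTotalDegree_C_le (a : R) : weightedTotalDegree w (C a : MvPolynomial σ R) ≤ 0 := by
  simpa using weightedTotalDegree_monomial_le w 0 a

lemma weightedTotalDegree_X_le (s : σ) :
    weightedTotalDegree w (X s : MvPolynomial σ R) ≤ w s := by
  simpa [X, Finsupp.weight_single] using
    weightedTotalDegree_monomial_le w (Finsupp.single s 1) (1 : R)

lemma weightedTotalDegree_sum_le {ι : Type*} (s : Finset ι) (p : ι → MvPolynomial σ R) :
    weightedTotalDegree w (∑ i ∈ s, p i) ≤ s.sup fun i => weightedTotalDegree w (p i) :=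
  AddMonoidAlgebra.supDegree_sum_le

variable [IsOrderedAddMonoid M]

lemma weightedTotalDegree_mul_le (p q : MvPolynomial σ R) :
    weightedTotalDegree w (p * q) ≤ weightedTotalDegree w p + weightedTotalDegree w q :=
  AddMonoidAlgebra.supDegree_mul_le (map_add _)

lemma weightedTotalDegree_prod_le {ι : Type*} (s : Finset ι) (p : ι → MvPolynomial σ R) :
    weightedTotalDegree w (∏ i ∈ s, p i) ≤ ∑ i ∈ s, weightedTotalDegree w (p i) :=
  AddMonoidAlgebra.supDegree_prod_le (map_zero _) (map_add _)

lemma weightedTotalDegree_pow_le (p : MvPolynomial σ R) (n : ℕ) :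
    weightedTotalDegree w (p ^ n) ≤ n • weightedTotalDegree w p := by
  simpa using weightedTotalDegree_prod_le w (Finset.range n) fun _ => p

lemma weightedTotalDegree_aeval_le (w' : τ → M) {φ : σ → MvPolynomial τ R}
    (hφ : ∀ s, weightedTotalDegree w' (φ s) ≤ w s) (p : MvPolynomial σ R) :
    weightedTotalDegree w' (aeval φ p) ≤ weightedTotalDegree w p := by
  conv_lhs => rw [p.as_sum, map_sum]
  refine (weightedTotalDegree_sum_le w' _ _).trans (Finset.sup_le fun μ hμ => ?_)
  rw [aeval_monomial, algebraMap_eq]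
  have hprod : weightedTotalDegree w' (μ.prod fun s k => φ s ^ k) ≤ Finsupp.weight w μ :=
    (weightedTotalDegree_prod_le w' _ _).trans <| Finset.sum_le_sum fun s _ =>
      (weightedTotalDegree_pow_le w' _ _).trans (nsmul_le_nsmul_right (hφ s) _)
  calc _ ≤ 0 + Finsupp.weight w μ :=
        (weightedTotalDegree_mul_le w' _ _).trans
          (add_le_add (weightedTotalDegree_C_le w' _) hprod)
    _ ≤ weightedTotalDegree w p := by rw [zero_add]; exact le_weightedTotalDegree w hμ

lemma degreeOf_nsmul_le_weightedTotalDegree [CanonicallyOrderedAdd M] (s : σ)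
    (p : MvPolynomial σ R) : degreeOf s p • w s ≤ weightedTotalDegree w p := by
  have hmono : Monotone fun n : ℕ => n • w s := fun _ _ h => nsmul_le_nsmul_left zero_le h
  calc degreeOf s p • w s = p.support.sup fun μ => μ s • w s := by
        rw [degreeOf_eq_sup]
        exact Finset.apply_sup_eq_sup_comp_of_linearOrder _ hmono (by simp [bot_eq_zero])
    _ ≤ weightedTotalDegree w p :=
        Finset.sup_mono_fun fun μ _ => Finsupp.apply_nsmul_le_weight w μ s

end WeightedTotalDegree

end MvPolynomial

namespace Radical

variable {m : ℕ} {R : Type*} [CommRing R] {M : Type*} [AddCommMonoid M] [SemilatticeSup M]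
  [OrderBot M] [IsOrderedAddMonoid M] (w : Fin (m+1) → M)

lemma weightedTotalDegree_remE_le (v : Fin (m+1)) (e : ℕ) (gk F : MvPolynomial (Fin (m+1)) R)
    (hg : weightedTotalDegree w gk ≤ e • w v) :
    weightedTotalDegree w (remE v e gk F) ≤ weightedTotalDegree w F := by
  refine (weightedTotalDegree_sum_le w _ _).trans (Finset.sup_le fun μ hμ => ?_)
  have hquot :
      weightedTotalDegree w (C (F.coeff μ) * gk ^ (μ v / e)) ≤ (μ v / e) • e • w v :=
    calc _ ≤ 0 + (μ v / e) • weightedTotalDegree w gk :=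
          (weightedTotalDegree_mul_le w _ _).trans
            (add_le_add (weightedTotalDegree_C_le w _) (weightedTotalDegree_pow_le w _ _))
      _ ≤ (μ v / e) • e • w v := by rw [zero_add]; exact nsmul_le_nsmul_right hg _
  calc _ ≤ (μ v / e) • e • w v + Finsupp.weight w (μ.update v (μ v % e)) :=
        (weightedTotalDegree_mul_le w _ _).trans
          (add_le_add hquot (weightedTotalDegree_monomial_le w _ _))
    _ = Finsupp.weight w μ := (Finsupp.weight_eq_nsmul_add_weight_update_mod w v e μ).symm
    _ ≤ weightedTotalDegree w F := le_weightedTotalDegree w hμ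

variable [Algebra ℂ R]

lemma weightedTotalDegree_conjVar_le (v : Fin (m+1)) (c : ℂ) (p : MvPolynomial (Fin (m+1)) R) :
    weightedTotalDegree w (conjVar v c p) ≤ weightedTotalDegree w p := by
  refine weightedTotalDegree_aeval_le w w (fun u => ?_) p
  split_ifs with h
  · subst h
    simpa using (weightedTotalDegree_mul_le w _ _).trans
      (add_le_add (weightedTotalDegree_C_le w _) (weightedTotalDegree_X_le w u))
  · exact weightedTotalDegree_X_le w u

variable {e : Fin m → ℕ} {g : Fin m → MvPolynomial (Fin (m+1)) R}

lemma weightedTotalDegree_step_le {k : Fin m}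
    (hg : weightedTotalDegree w (g k) ≤ e k • w k.succ) (p : MvPolynomial (Fin (m+1)) R) :
    weightedTotalDegree w (step e g k p) ≤ e k • weightedTotalDegree w p := by
  refine (weightedTotalDegree_remE_le w _ _ _ _ hg).trans ?_
  refine (weightedTotalDegree_prod_le w _ _).trans ?_
  calc _ ≤ (Finset.range (e k)).card • weightedTotalDegree w p :=
        Finset.sum_le_card_nsmul _ _ _ fun _ _ => weightedTotalDegree_conjVar_le w _ _ p
    _ = e k • weightedTotalDegree w p := by rw [Finset.card_range]

lemma weightedTotalDegree_seqAux_le (hg : ∀ k, weightedTotalDegree w (g k) ≤ e k • w k.succ)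
    (f : MvPolynomial (Fin (m+1)) R) (j : ℕ) :
    weightedTotalDegree w (seqAux e g f j) ≤
      (∏ i ∈ Finset.univ.filter (fun i : Fin m => m - j ≤ i), e i) •
        weightedTotalDegree w f := by
  induction j with
  | zero => simp [seqAux, Finset.filter_false_of_mem]
  | succ j ih =>
    by_cases hj : j < m
    · set k : Fin m := ⟨m - 1 - j, by omega⟩
      have hinsert : Finset.univ.filter (fun i : Fin m => m - (j + 1) ≤ i) =
          insert k (Finset.univ.filter fun i : Fin m => m - j ≤ i) := by
        ext i
        simp only [Finset.mem_insert, Finset.mem_filter, Finset.mem_univ, true_and, Fin.ext_iff, k]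
        omega
      have hk : k ∉ Finset.univ.filter fun i : Fin m => m - j ≤ i := by
        simp only [Finset.mem_filter, Finset.mem_univ, true_and, k]
        omega
      rw [seqAux, dif_pos hj, hinsert, Finset.prod_insert hk, mul_smul]
      exact (weightedTotalDegree_step_le w (hg k) _).trans (nsmul_le_nsmul_right ih _)
    · rw [seqAux, dif_neg hj, show m - (j + 1) = m - j by omega]
      exact ih

lemma weightedTotalDegree_Rnorm_le (hg : ∀ k, weightedTotalDegree w (g k) ≤ e k • w k.succ)
    (f : MvPolynomial (Fin (m+1)) R) :
    weightedTotalDegree w (Rnorm e g f) ≤ (∏ i, e i) • weightedTotalDegree w f := by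
  simpa [Rnorm] using weightedTotalDegree_seqAux_le w hg f m

theorem stmt3_general
    (m : ℕ) (e : Fin m → ℕ)
    (g : Fin m → MvPolynomial (Fin (m+1)) ℂ)
    (w : Fin (m+1) → ℚ≥0) (hw0 : w 0 = 1)
    (hw : ∀ i : Fin m, (e i : ℚ≥0) * w i.succ = weightedTotalDegree w (g i))
    (f : MvPolynomial (Fin (m+1)) ℂ) :
    ((degreeOf 0 (Rnorm e g f) : ℚ≥0)) ≤ weightedTotalDegree w f * ∏ i, (e i : ℚ≥0) := by
  have hg : ∀ i, weightedTotalDegree w (g i) ≤ e i • w i.succ := fun i => by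
    rw [nsmul_eq_mul, hw i]
  calc ((degreeOf 0 (Rnorm e g f) : ℚ≥0))
      = degreeOf 0 (Rnorm e g f) • w 0 := by rw [hw0, nsmul_eq_mul, mul_one]
    _ ≤ weightedTotalDegree w (Rnorm e g f) := degreeOf_nsmul_le_weightedTotalDegree w 0 _
    _ ≤ (∏ i, e i) • weightedTotalDegree w f := weightedTotalDegree_Rnorm_le w hg f
    _ = weightedTotalDegree w f * ∏ i, (e i : ℚ≥0) := by
      rw [nsmul_eq_mul, Nat.cast_prod, mul_comm]

/-- For every nonzero `f ∈ ℂ[t,Δ₁,…,Δ_m]`, `deg_t(R(f)) ≤ deg(f)·e₁⋯e_m`, where `deg` is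
the weighted degree (`deg t = 1`, `e_i·deg Δ_i = deg g_i`) and `R(f)` is the normalized
remainder of `f`. -/
theorem stmt3
    (m : ℕ) (hm : 1 ≤ m) (e : Fin m → ℕ) (he : ∀ i, 2 ≤ e i)
    (g : Fin m → MvPolynomial (Fin (m+1)) ℂ)
    (hgv : ∀ i : Fin m, ∀ v ∈ (g i).vars, (v : ℕ) ≤ (i : ℕ))
    (hgd : ∀ i j : Fin m, (j : ℕ) < (i : ℕ) → MvPolynomial.degreeOf j.succ (g i) < e j)
    (w : Fin (m+1) → ℚ≥0) (hw0 : w 0 = 1)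
    (hw : ∀ i : Fin m, (e i : ℚ≥0) * w i.succ = weightedTotalDegree w (g i))
    (f : MvPolynomial (Fin (m+1)) ℂ) (hf : f ≠ 0) :
    ((degreeOf 0 (Rnorm e g f) : ℚ≥0)) ≤ weightedTotalDegree w f * ∏ i, (e i : ℚ≥0) :=
  stmt3_general m e g w hw0 hw f

end Radical

end
end

section
/- Let e ≥ 2, let g(t) = a_0 + a_1 t + ⋯ + a_k t^k ∈ ℂ[t] with a_k ≠ 0, and let f(t,Δ) = c_0(t) + c_1(t)Δ + ⋯ + c_{e−1}(t)Δ^{e−1} be a nonzero polynomial in ℂ[t,Δ]. Let M = max{ deg_t(c_i) + (k/e)·i : c_i ≠ 0 }, let J = { i : c_i ≠ 0 and deg_t(c_i) + (k/e)·i = M }, and let f_l(Δ) = Σ_{i∈J} lc(c_i)·Δ^i ∈ ℂ[Δ], where lc denotes the leading coefficient. Then Res_Δ(f, Δ^e − g) = L·t^{eM} + (terms of strictly lower degree in t), where L = Res_Δ(f_l(Δ), Δ^e − a_k); that is, the coefficient of t^{eM} in Res_Δ(f, Δ^e − g) equals Res_Δ(f_l(Δ), Δ^e − a_k), and all higher coefficients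 vanish. -/
noncomputable section

/-- For `A, B ∈ S[X]` with `A` monic, the resultant `Res_X(A, B)` equals the product of
the values of `B` at the roots of `A`, i.e. the norm of `B mod A` in `S[X]/(A)`; we take
this as the definition of the resultant (for monic `A`). -/
def resultantOfMonic {S : Type*} [CommRing S] (A B : Polynomial S) : S :=
  Algebra.norm S (AdjoinRoot.mk A B)

/-!
Write `k = deg g` and `c_m = f.coeff m`. The resultant is the determinant of the matrix of
multiplication by `f` on `ℂ[t][Δ]/(Δ^e - g)` in the basis `1, Δ, …, Δ^(e-1)`, whose
`(i, j)` entry is `c_(i-j)` for `j ≤ i` and `g · c_(i+e-j)` otherwise. Substituting `t ↦ t^e`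
and multiplying by `diag(t^(k i))` on the left and `diag(t^(k (e - j)))` on the right turns the
weighted degree into the ordinary degree, at the cost of a factor `t^(k e²)`: afterwards every
entry has degree at most `k e + e M`, so the top coefficient of the determinant is the
determinant of the top coefficients of the entries, and this matrix is the one computing
`Res(f_l, Δ^e - a_k)`.
-/

open Polynomial Finset

section

variable {R : Type*} [CommRing R]

/-- For `b = 1`, the matrix of multiplication by `∑ₘ B m • X ^ m` on `R[X] ⧸ (X ^ e - C a)` in
the basis `1, X, …, X ^ (e - 1)`, provided `B m = 0` for `m ≥ e`. -/
def twistedCirculant (e : ℕ) (b a : R) (B : ℕ → R) : Matrix (Fin e) (Fin e) R :=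
  Matrix.of fun i j => if j ≤ i then b * B (i - j) else a * B (i + e - j)

/-- The coefficients of `f(t ^ e, t ^ k Δ)` when `B = f.coeff`: the degree of
`weightedExpand e k B m` is `e` times the weighted degree of `B m • Δ ^ m` with
`deg t = 1`, `deg Δ = k / e`. -/
def weightedExpand (e k : ℕ) (B : ℕ → R[X]) (m : ℕ) : R[X] :=
  X ^ (k * m) * expand R e (B m)

theorem resultantOfMonic_eq_det {A : R[X]} (hA : A.Monic) (B : R[X]) :
    resultantOfMonic A B =
      (Matrix.of fun i j : Fin A.natDegree => ((B * X ^ (j : ℕ)) %ₘ A).coeff i).det := by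
  rw [resultantOfMonic, Algebra.norm_eq_matrix_det (AdjoinRoot.powerBasis' hA).basis]
  congr 1
  ext i j
  rw [Algebra.leftMulMatrix_eq_repr_mul, (AdjoinRoot.powerBasis' hA).basis_eq_pow,
    AdjoinRoot.powerBasis'_gen, ← AdjoinRoot.mk_X, ← map_pow, ← map_mul]
  exact congrArg (coeff · i) (AdjoinRoot.modByMonicHom_mk hA _)

theorem coeff_modByMonic_X_pow_sub_C {e : ℕ} (he : 0 < e) (a : R) {p : R[X]}
    (hp : p.natDegree < e + e) {i : ℕ} (hi : i < e) :
    (p %ₘ (X ^ e - C a)).coeff i = p.coeff i + a * p.coeff (e + i) := by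
  nontriviality R
  have hA : (X ^ e - C a).Monic := monic_X_pow_sub_C a he.ne'
  set r : R[X] := ∑ n ∈ range e, C (p.coeff n + a * p.coeff (e + n)) * X ^ n
  have hdvd : X ^ e - C a ∣ p - r :=
    ⟨∑ n ∈ range e, C (p.coeff (e + n)) * X ^ n, by
      conv_lhs => rw [p.as_sum_range_C_mul_X_pow' hp, sum_range_add]
      simp only [r, mul_sum, ← sum_add_distrib, ← sum_sub_distrib, C_add, C_mul, pow_add]
      refine sum_congr rfl fun n _ => by ring⟩
  have hr : r.degree < (X ^ e - C a).degree := by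
    rw [degree_X_pow_sub_C he]
    refine mem_degreeLT.1 (Submodule.sum_mem _ fun n hn => mem_degreeLT.2 ?_)
    exact (degree_C_mul_X_pow_le _ _).trans_lt (by exact_mod_cast mem_range.1 hn)
  rw [modByMonic_eq_of_dvd_sub hA hdvd, (modByMonic_eq_self_iff hA).2 hr, finsetSum_coeff]
  simp only [coeff_C_mul_X_pow, sum_ite_eq, if_pos (mem_range.2 hi)]

theorem resultantOfMonic_X_pow_sub_C {e : ℕ} (he : 0 < e) (a : R) {B : R[X]}
    (hB : B.natDegree < e) :
    resultantOfMonic (X ^ e - C a) B = (twistedCirculant e 1 a B.coeff).det := by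
  nontriviality R
  rw [resultantOfMonic_eq_det (monic_X_pow_sub_C a he.ne'),
    ← Matrix.det_reindex_self (finCongr natDegree_X_pow_sub_C)]
  congr 1
  ext i j
  have hBj : (B * X ^ (j : ℕ)).natDegree < e + e :=
    natDegree_mul_le.trans_lt (by rw [natDegree_X_pow]; omega)
  simp only [Matrix.reindex_apply, Matrix.submatrix_apply, Matrix.of_apply, finCongr_symm,
    finCongr_apply, Fin.val_cast, twistedCirculant,
    coeff_modByMonic_X_pow_sub_C he a hBj i.isLt, coeff_mul_X_pow']
  rw [if_pos (show (j : ℕ) ≤ e + i by omega), add_comm e]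
  by_cases hji : j ≤ i
  · rw [if_pos hji, if_pos (Fin.le_def.1 hji), one_mul,
      coeff_eq_zero_of_natDegree_lt (by omega : B.natDegree < i + e - j), mul_zero, add_zero]
  · rw [if_neg hji, if_neg (mt Fin.le_def.2 hji), zero_add]

theorem Matrix.coeff_det_of_natDegree_le {n : Type*} [Fintype n] [DecidableEq n]
    {A : Matrix n n R[X]} {N : ℕ} (hA : ∀ i j, (A i j).natDegree ≤ N) :
    A.det.coeff (Fintype.card n * N) = (A.map (coeff · N)).det := by
  rw [Matrix.det_apply, Matrix.det_apply, finsetSum_coeff]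
  refine sum_congr rfl fun σ _ => ?_
  rw [Units.smul_def, Units.smul_def, coeff_smul, ← card_univ,
    coeff_prod_of_natDegree_le _ _ N fun i _ => hA _ _]
  rfl

theorem Matrix.natDegree_det_le_of_natDegree_le {n : Type*} [Fintype n] [DecidableEq n]
    {A : Matrix n n R[X]} {N : ℕ} (hA : ∀ i j, (A i j).natDegree ≤ N) :
    A.det.natDegree ≤ Fintype.card n * N := by
  rw [Matrix.det_apply]
  refine natDegree_sum_le_of_forall_le _ _ fun σ _ => ?_
  rw [Units.smul_def]
  refine (natDegree_smul_le _ _).trans ((natDegree_prod_le _ _).trans ?_)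
  simpa using sum_le_sum fun i (_ : i ∈ univ) => hA (σ i) i

section Bounds

variable {e K D : ℕ} {b a : R[X]} {F : ℕ → R[X]}

theorem natDegree_twistedCirculant_le (hb : b.natDegree ≤ K) (ha : a.natDegree ≤ K)
    (hF : ∀ m, (F m).natDegree ≤ D) (i j : Fin e) :
    (twistedCirculant e b a F i j).natDegree ≤ K + D := by
  simp only [twistedCirculant, Matrix.of_apply]
  split_ifs
  exacts [natDegree_mul_le_of_le hb (hF _), natDegree_mul_le_of_le ha (hF _)]

theorem twistedCirculant_map_coeff (hb : b.natDegree ≤ K) (ha : a.natDegree ≤ K)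
    (hF : ∀ m, (F m).natDegree ≤ D) :
    (twistedCirculant e b a F).map (coeff · (K + D)) =
      twistedCirculant e (b.coeff K) (a.coeff K) fun m => (F m).coeff D := by
  ext i j
  simp only [twistedCirculant, Matrix.map_apply, Matrix.of_apply]
  split_ifs
  exacts [coeff_mul_add_eq_of_natDegree_le hb (hF _), coeff_mul_add_eq_of_natDegree_le ha (hF _)]

end Bounds

section WeightedExpand

variable {e k : ℕ} {c g : R[X]} {B : ℕ → R[X]}

theorem natDegree_expand_le (hg : g.natDegree ≤ k) : (expand R e g).natDegree ≤ k * e := by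
  rw [natDegree_expand]
  exact Nat.mul_le_mul_right e hg

theorem natDegree_X_pow_mul_expand_le (n : ℕ) :
    (X ^ n * expand R e c).natDegree ≤ n + c.natDegree * e :=
  natDegree_mul_le_of_le (natDegree_X_pow_le n) (natDegree_expand_le le_rfl)

theorem coeff_X_pow_mul_expand_add (he : 0 < e) (n : ℕ) :
    (X ^ n * expand R e c).coeff (n + c.natDegree * e) = c.leadingCoeff := by
  rw [coeff_mul_add_eq_of_natDegree_le (natDegree_X_pow_le n) (natDegree_expand_le le_rfl),
    coeff_X_pow_self, one_mul, coeff_expand_mul he, leadingCoeff]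

theorem natDegree_weightedExpand_le {f : R[X][X]} {D : ℕ}
    (hf : ∀ m, f.coeff m ≠ 0 → k * m + (f.coeff m).natDegree * e ≤ D) (m : ℕ) :
    (weightedExpand e k f.coeff m).natDegree ≤ D := by
  by_cases hc : f.coeff m = 0
  · simp [weightedExpand, hc]
  · exact (natDegree_X_pow_mul_expand_le _).trans (hf m hc)

theorem coeff_weightedExpand {f : R[X][X]} {D : ℕ} {J : Finset ℕ} (he : 0 < e)
    (hf : ∀ m, f.coeff m ≠ 0 → k * m + (f.coeff m).natDegree * e ≤ D)
    (hJ : ∀ m, m ∈ J ↔ f.coeff m ≠ 0 ∧ k * m + (f.coeff m).natDegree * e = D) (m : ℕ) :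
    (weightedExpand e k f.coeff m).coeff D = if m ∈ J then (f.coeff m).leadingCoeff else 0 := by
  split_ifs with hmJ
  · rw [← ((hJ m).1 hmJ).2]
    exact coeff_X_pow_mul_expand_add he _
  by_cases hc : f.coeff m = 0
  · simp [weightedExpand, hc]
  have hlt : k * m + (f.coeff m).natDegree * e < D :=
    (hf m hc).lt_of_ne fun h => hmJ ((hJ m).2 ⟨hc, h⟩)
  exact coeff_eq_zero_of_natDegree_lt ((natDegree_X_pow_mul_expand_le _).trans_lt hlt)

theorem diagonal_mul_map_expand_twistedCirculant_mul_diagonal (e k : ℕ) (g : R[X])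
    (B : ℕ → R[X]) :
    Matrix.diagonal (fun i : Fin e => (X : R[X]) ^ (k * i)) *
        (twistedCirculant e 1 g B).map (expand R e) *
        Matrix.diagonal (fun j : Fin e => (X : R[X]) ^ (k * (e - j))) =
      twistedCirculant e (X ^ (k * e)) (expand R e g) (weightedExpand e k B) := by
  ext i j : 1
  have hj := j.isLt
  simp only [Matrix.diagonal_mul, Matrix.mul_diagonal, Matrix.map_apply, twistedCirculant,
    weightedExpand, Matrix.of_apply]
  split_ifs with hji <;> simp only [map_mul, one_mul]
  · have : k * i + k * (e - j) = k * e + k * (i - j) := by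
      rw [← mul_add, ← mul_add]; congr 1; omega
    rw [mul_right_comm, ← pow_add, this, pow_add, mul_assoc]
  · have : k * i + k * (e - j) = k * (i + e - j) := by
      rw [← mul_add]; congr 1; omega
    rw [mul_right_comm, ← pow_add, this]
    ring

theorem det_twistedCirculant_weightedExpand (e k : ℕ) (g : R[X]) (B : ℕ → R[X]) :
    (twistedCirculant e (X ^ (k * e)) (expand R e g) (weightedExpand e k B)).det =
      X ^ (k * e * e) * expand R e (twistedCirculant e 1 g B).det := by
  rw [← diagonal_mul_map_expand_twistedCirculant_mul_diagonal, Matrix.det_mul, Matrix.det_mul,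
    Matrix.det_diagonal, Matrix.det_diagonal, AlgHom.map_det]
  have hX : (∏ i : Fin e, (X : R[X]) ^ (k * i)) * ∏ i : Fin e, X ^ (k * (e - i)) =
      X ^ (k * e * e) := by
    rw [← prod_mul_distrib, pow_mul, ← Fin.prod_const]
    refine prod_congr rfl fun i _ => ?_
    rw [← pow_add, ← mul_add, Nat.add_sub_cancel' i.isLt.le]
  rw [mul_right_comm, hX]
  rfl

theorem coeff_det_twistedCirculant_eq (he : 0 < e) (d : ℕ) :
    (twistedCirculant e 1 g B).det.coeff d =
      (twistedCirculant e (X ^ (k * e)) (expand R e g) (weightedExpand e k B)).det.coeff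
        (d * e + k * e * e) := by
  rw [det_twistedCirculant_weightedExpand, coeff_X_pow_mul, coeff_expand_mul he]

variable {D : ℕ}

theorem coeff_det_twistedCirculant_of_weightedExpand_le (he : 0 < e) (hg : g.natDegree ≤ k)
    (hB : ∀ m, (weightedExpand e k B m).natDegree ≤ D) :
    (twistedCirculant e 1 g B).det.coeff D =
      (twistedCirculant e 1 (g.coeff k) fun m => (weightedExpand e k B m).coeff D).det := by
  have hX := natDegree_X_pow_le (R := R) (k * e)
  rw [coeff_det_twistedCirculant_eq he,
    show D * e + k * e * e = Fintype.card (Fin e) * (k * e + D) by rw [Fintype.card_fin]; ring,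
    Matrix.coeff_det_of_natDegree_le (natDegree_twistedCirculant_le hX (natDegree_expand_le hg) hB),
    twistedCirculant_map_coeff hX (natDegree_expand_le hg) hB, coeff_X_pow_self,
    coeff_expand_mul he]

theorem coeff_det_twistedCirculant_eq_zero_of_weightedExpand_le (he : 0 < e)
    (hg : g.natDegree ≤ k) (hB : ∀ m, (weightedExpand e k B m).natDegree ≤ D) {d : ℕ}
    (hd : D < d) : (twistedCirculant e 1 g B).det.coeff d = 0 := by
  have hdet := Matrix.natDegree_det_le_of_natDegree_le <|
    natDegree_twistedCirculant_le (e := e) (natDegree_X_pow_le (k * e)) (natDegree_expand_le hg) hB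
  rw [coeff_det_twistedCirculant_eq he]
  refine coeff_eq_zero_of_natDegree_lt (hdet.trans_lt ?_)
  rw [Fintype.card_fin]
  nlinarith

end WeightedExpand

end

section WeightedDegree

variable {e D n k m : ℕ} {M : ℚ}

theorem cast_weightedDegree (he : 0 < e) :
    ((k * m + n * e : ℕ) : ℚ) = e * ((n : ℚ) + (k : ℚ) / e * m) := by
  push_cast
  field_simp
  ring

theorem weightedDegree_le_iff (he : 0 < e) (hD : (D : ℚ) = e * M) :
    (n : ℚ) + (k : ℚ) / e * m ≤ M ↔ k * m + n * e ≤ D := by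
  rw [← Nat.cast_le (α := ℚ), cast_weightedDegree he, hD,
    mul_le_mul_iff_of_pos_left (by exact_mod_cast he)]

theorem weightedDegree_eq_iff (he : 0 < e) (hD : (D : ℚ) = e * M) :
    (n : ℚ) + (k : ℚ) / e * m = M ↔ k * m + n * e = D := by
  rw [← Nat.cast_inj (R := ℚ), cast_weightedDegree he, hD,
    mul_right_inj' (by exact_mod_cast he.ne')]

end WeightedDegree

theorem stmt7_general (e : ℕ) (g : Polynomial ℂ)
    (f : Polynomial (Polynomial ℂ)) (hfe : f.natDegree < e)
    (M : ℚ)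
    (hM1 : ∀ i, f.coeff i ≠ 0 → ((f.coeff i).natDegree : ℚ) + (g.natDegree : ℚ) / e * i ≤ M)
    (hM2 : ∃ i, f.coeff i ≠ 0 ∧ ((f.coeff i).natDegree : ℚ) + (g.natDegree : ℚ) / e * i = M)
    (J : Finset ℕ)
    (hJ : ∀ i, i ∈ J ↔
      (f.coeff i ≠ 0 ∧ ((f.coeff i).natDegree : ℚ) + (g.natDegree : ℚ) / e * i = M))
    (fl : Polynomial ℂ)
    (hfl : fl = ∑ i ∈ J, Polynomial.C ((f.coeff i).leadingCoeff) * Polynomial.X ^ i) :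
    ∃ D : ℕ, (D : ℚ) = e * M ∧
      (resultantOfMonic (Polynomial.X ^ e - Polynomial.C g) f).coeff D =
        resultantOfMonic (Polynomial.X ^ e - Polynomial.C g.leadingCoeff) fl ∧
      ∀ d : ℕ, D < d →
        (resultantOfMonic (Polynomial.X ^ e - Polynomial.C g) f).coeff d = 0 := by
  have he : 0 < e := Nat.zero_lt_of_lt hfe
  obtain ⟨i₀, -, hM⟩ := hM2
  set D := g.natDegree * i₀ + (f.coeff i₀).natDegree * e
  have hD : (D : ℚ) = e * M := by rw [cast_weightedDegree he, hM]
  have hle (m : ℕ) (hc : f.coeff m ≠ 0) : g.natDegree * m + (f.coeff m).natDegree * e ≤ D :=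
    (weightedDegree_le_iff he hD).1 (hM1 m hc)
  have hJD (m : ℕ) :
      m ∈ J ↔ f.coeff m ≠ 0 ∧ g.natDegree * m + (f.coeff m).natDegree * e = D := by
    rw [hJ, weightedDegree_eq_iff he hD]
  have hfl_coeff (m : ℕ) : fl.coeff m = (weightedExpand e g.natDegree f.coeff m).coeff D := by
    simp only [coeff_weightedExpand he hle hJD, hfl, finsetSum_coeff, coeff_C_mul_X_pow, sum_ite_eq]
  have hfl_natDegree : fl.natDegree < e := by
    refine (natDegree_le_iff_coeff_eq_zero.2 fun m hm => ?_).trans_lt hfe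
    rw [hfl_coeff, coeff_weightedExpand he hle hJD,
      if_neg fun hmJ => hm.not_ge (le_natDegree_of_ne_zero ((hJ m).1 hmJ).1)]
  have hF := natDegree_weightedExpand_le hle
  refine ⟨D, hD, ?_, fun d hd => ?_⟩
  · rw [resultantOfMonic_X_pow_sub_C he _ hfe, resultantOfMonic_X_pow_sub_C he _ hfl_natDegree,
      coeff_det_twistedCirculant_of_weightedExpand_le he le_rfl hF, funext hfl_coeff]
    rfl
  · rw [resultantOfMonic_X_pow_sub_C he _ hfe]
    exact coeff_det_twistedCirculant_eq_zero_of_weightedExpand_le he le_rfl hF hd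

/-- The case `m = 1`: `E = Δ^e − g(t)`, weighted degree `deg t = 1`, `deg Δ = k/e` where
`k = deg g`.  Writing `f = Σ_i c_i(t) Δ^i ∈ ℂ[t][Δ]` (so `ℂ[t][Δ]` is
`Polynomial (Polynomial ℂ)`, with `Δ` the outer variable and `c_i = f.coeff i`),
`M` the weighted degree of `f`, `J` the set of indices attaining it, and
`f_l = Σ_{i∈J} lc(c_i)·Δ^i`, one has
`Res_Δ(f, Δ^e − g) = L·t^{eM} +` (terms of strictly lower degree in `t`), where
`L = Res_Δ(f_l, Δ^e − a_k)` and `a_k = lc(g)`; that is, `e·M` is a natural number `D`,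
the coefficient of `t^D` in `Res_Δ(f, Δ^e − g)` equals `L`, and all higher coefficients
vanish. -/
theorem stmt7 (e : ℕ) (he : 2 ≤ e) (g : Polynomial ℂ) (hg : g ≠ 0)
    (f : Polynomial (Polynomial ℂ)) (hf : f ≠ 0) (hfe : f.natDegree < e)
    (M : ℚ)
    (hM1 : ∀ i, f.coeff i ≠ 0 → ((f.coeff i).natDegree : ℚ) + (g.natDegree : ℚ) / e * i ≤ M)
    (hM2 : ∃ i, f.coeff i ≠ 0 ∧ ((f.coeff i).natDegree : ℚ) + (g.natDegree : ℚ) / e * i = M)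
    (J : Finset ℕ)
    (hJ : ∀ i, i ∈ J ↔
      (f.coeff i ≠ 0 ∧ ((f.coeff i).natDegree : ℚ) + (g.natDegree : ℚ) / e * i = M))
    (fl : Polynomial ℂ)
    (hfl : fl = ∑ i ∈ J, Polynomial.C ((f.coeff i).leadingCoeff) * Polynomial.X ^ i) :
    ∃ D : ℕ, (D : ℚ) = e * M ∧
      (resultantOfMonic (Polynomial.X ^ e - Polynomial.C g) f).coeff D =
        resultantOfMonic (Polynomial.X ^ e - Polynomial.C g.leadingCoeff) fl ∧
      ∀ d : ℕ, D < d →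
        (resultantOfMonic (Polynomial.X ^ e - Polynomial.C g) f).coeff d = 0 :=
  stmt7_general e g f hfe M hM1 hM2 J hJ fl hfl
end
end

section
/- Let p, q ∈ ℂ[t,Δ_1,…,Δ_m]. If gcd(R(p), R(q)) = 1 in ℂ[t], then there is no point (t,Δ̄) ∈ ℂ^{m+1} satisfying E_i(t,Δ̄) = 0 for all i = 1,…,m together with p(t,Δ̄) = 0 and q(t,Δ̄) = 0; equivalently, the ideal generated by E_1,…,E_m, p, q is the whole ring ℂ[t,Δ_1,…,Δ_m]. -/
/-!
At a common zero `a` of `E₁, …, E_m`, every step `f_k ↦ f_{k-1}` of the recursion preserves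
vanishing at `a`: the factor `j = e_k` of `F_k` is `f_k` itself (as `γ_k^{e_k} = 1`), and
reducing modulo `E_k` replaces `Δ_k^{e_k}` by `g_k`, which has the same value at `a`. Hence a
common zero of `E₁, …, E_m, p, q` gives a common root `a₀` of `R(p)` and `R(q)`, which coprime
polynomials cannot have. The statement about the ideal is then the Nullstellensatz.
-/

open MvPolynomial
open scoped NNRat

noncomputable section
namespace Radical

variable {m : ℕ} {R : Type*} [CommRing R] [Algebra ℂ R]

section Evaluation

variable {m : ℕ} {R : Type*} [CommRing R]

theorem eval_remE (a : Fin (m+1) → R) {v : Fin (m+1)} {e : ℕ}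
    {gk : MvPolynomial (Fin (m+1)) R} (h : a v ^ e = eval a gk) (F : MvPolynomial (Fin (m+1)) R) :
    eval a (remE v e gk F) = eval a F := by
  rw [remE, map_finsuppSum, eval_eq']
  refine Finset.sum_congr rfl fun μ _ => ?_
  change eval a (C (coeff μ F) * gk ^ (μ v / e) * monomial (μ.update v (μ v % e)) 1) = _
  rw [eval_mul, eval_mul, eval_C, eval_pow, eval_monomial, ← h,
    Finsupp.prod_fintype _ _ fun i => pow_zero _]
  have update_pow : ∀ i, a i ^ μ.update v (μ v % e) i
      = Function.update (fun i => a i ^ μ i) v (a v ^ (μ v % e)) i := fun i => by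
    rcases eq_or_ne i v with rfl | hi
    · simp
    · simp [Finsupp.update, hi]
  rw [Finset.prod_congr rfl fun i _ => update_pow i,
    Finset.prod_update_of_mem (Finset.mem_univ v),
    ← Finset.mul_prod_erase Finset.univ (fun i => a i ^ μ i) (Finset.mem_univ v),
    Finset.erase_eq]
  have div_mod : (a v ^ e) ^ (μ v / e) * a v ^ (μ v % e) = a v ^ μ v := by
    rw [← pow_mul, ← pow_add, Nat.div_add_mod]
  linear_combination (coeff μ F * ∏ x ∈ Finset.univ \ {v}, a x ^ μ x) * div_mod

theorem conjVar_one [Algebra ℂ R] (v : Fin (m+1)) :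
    conjVar (R := R) v 1 = AlgHom.id R (MvPolynomial (Fin (m+1)) R) := by
  ext u
  rcases eq_or_ne u v with rfl | h
  · simp [conjVar]
  · simp [conjVar, h]

theorem root_pow_self {n : ℕ} (hn : n ≠ 0) : root n ^ n = 1 :=
  (Complex.isPrimitiveRoot_exp n hn).pow_eq_one

theorem dvd_conjProd [Algebra ℂ R] {e : Fin m → ℕ} {k : Fin m} (hk : e k ≠ 0)
    (f : MvPolynomial (Fin (m+1)) R) : f ∣ conjProd e k f := by
  have last : conjVar k.succ (root (e k) ^ (e k - 1 + 1)) f = f := by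
    rw [Nat.sub_add_cancel (Nat.one_le_iff_ne_zero.2 hk), root_pow_self hk, conjVar_one,
      AlgHom.id_apply]
  conv_lhs => rw [← last]
  exact Finset.dvd_prod_of_mem _ (Finset.mem_range.2 (by omega))

theorem eval_Epoly_eq_zero_iff (a : Fin (m+1) → R) (e : Fin m → ℕ)
    (g : Fin m → MvPolynomial (Fin (m+1)) R) (i : Fin m) :
    eval a (Epoly e g i) = 0 ↔ a i.succ ^ e i = eval a (g i) := by
  rw [Epoly, map_sub, sub_eq_zero, eval_pow, eval_X]

variable [Algebra ℂ R] {a : Fin (m+1) → R} {e : Fin m → ℕ} {g : Fin m → MvPolynomial (Fin (m+1)) R}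

theorem eval_step_eq_zero {k : Fin m} (hk : e k ≠ 0) (hE : eval a (Epoly e g k) = 0)
    {f : MvPolynomial (Fin (m+1)) R} (hf : eval a f = 0) : eval a (step e g k f) = 0 := by
  rw [step, eval_remE a ((eval_Epoly_eq_zero_iff a e g k).1 hE)]
  obtain ⟨c, hc⟩ := dvd_conjProd hk f
  rw [hc, eval_mul, hf, zero_mul]

theorem eval_Rnorm_eq_zero (he : ∀ i, e i ≠ 0) (hE : ∀ i, eval a (Epoly e g i) = 0)
    {f : MvPolynomial (Fin (m+1)) R} (hf : eval a f = 0) : eval a (Rnorm e g f) = 0 := by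
  suffices ∀ j, eval a (seqAux e g f j) = 0 from this m
  intro j
  induction j with
  | zero => exact hf
  | succ j ih =>
    rw [seqAux]
    split
    · exact eval_step_eq_zero (he _) (hE _) ih
    · exact ih

end Evaluation

theorem eval_aeval_X {σ K : Type*} [CommRing K] (a : σ → K) (i : σ) (P : Polynomial K) :
    eval a (Polynomial.aeval (X i : MvPolynomial σ K) P) = P.eval (a i) := by
  simpa using (Polynomial.aeval_algHom_apply (aeval a) (X i : MvPolynomial σ K) P).symm

theorem span_eq_top_of_not_exists_common_zero {σ K : Type*} [Finite σ] [Field K] [IsAlgClosed K]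
    {S : Set (MvPolynomial σ K)} (h : ¬ ∃ x : σ → K, ∀ p ∈ S, eval x p = 0) :
    Ideal.span S = ⊤ := by
  have no_zero : zeroLocus K (Ideal.span S) = ∅ := by
    rw [zeroLocus_span]
    exact Set.eq_empty_of_forall_notMem fun x hx => h ⟨x, fun p hp => by simpa using hx p hp⟩
  have nullstellensatz := vanishingIdeal_zeroLocus_eq_radical (K := K) (Ideal.span S)
  rw [no_zero, vanishingIdeal_empty] at nullstellensatz
  exact Ideal.radical_eq_top.1 nullstellensatz.symm

theorem stmt9_general
    (m : ℕ) (e : Fin m → ℕ) (he : ∀ i, 2 ≤ e i)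
    (g : Fin m → MvPolynomial (Fin (m+1)) ℂ)
    (p q : MvPolynomial (Fin (m+1)) ℂ)
    (P Q : Polynomial ℂ)
    (hP : Polynomial.aeval (X 0 : MvPolynomial (Fin (m+1)) ℂ) P = Rnorm e g p)
    (hQ : Polynomial.aeval (X 0 : MvPolynomial (Fin (m+1)) ℂ) Q = Rnorm e g q)
    (hgcd : IsCoprime P Q) :
    (¬ ∃ a : Fin (m+1) → ℂ,
        (∀ i, eval a (Epoly e g i) = 0) ∧ eval a p = 0 ∧ eval a q = 0) ∧
      Ideal.span (insert p (insert q (Set.range (Epoly e g)))) = ⊤ := by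
  have no_common_zero : ¬ ∃ a : Fin (m+1) → ℂ,
      (∀ i, eval a (Epoly e g i) = 0) ∧ eval a p = 0 ∧ eval a q = 0 := by
    rintro ⟨a, hE, hp, hq⟩
    have he' : ∀ i, e i ≠ 0 := fun i => by have := he i; omega
    have hP0 : P.eval (a 0) = 0 := by rw [← eval_aeval_X, hP, eval_Rnorm_eq_zero he' hE hp]
    have hQ0 : Q.eval (a 0) = 0 := by rw [← eval_aeval_X, hQ, eval_Rnorm_eq_zero he' hE hq]
    rcases Polynomial.aeval_ne_zero_of_isCoprime hgcd (a 0) with h | h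
    · exact h hP0
    · exact h hQ0
  refine ⟨no_common_zero, span_eq_top_of_not_exists_common_zero ?_⟩
  rintro ⟨a, ha⟩
  exact no_common_zero ⟨a, fun i => ha _ (by simp), ha p (by simp), ha q (by simp)⟩

/-- If `gcd(R(p), R(q)) = 1` in `ℂ[t]` (recall `R(p), R(q) ∈ ℂ[t]`, embedded in
`ℂ[t,Δ₁,…,Δ_m]` via `t ↦ X 0`), then there is no point `(t,Δ̄) ∈ ℂ^{m+1}` satisfying
`E_i(t,Δ̄) = 0` for all `i` together with `p(t,Δ̄) = 0` and `q(t,Δ̄) = 0`; equivalently,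
the ideal generated by `E₁,…,E_m, p, q` is the whole ring. -/
theorem stmt9
    (m : ℕ) (hm : 1 ≤ m) (e : Fin m → ℕ) (he : ∀ i, 2 ≤ e i)
    (g : Fin m → MvPolynomial (Fin (m+1)) ℂ)
    (hgv : ∀ i : Fin m, ∀ v ∈ (g i).vars, (v : ℕ) ≤ (i : ℕ))
    (hgd : ∀ i j : Fin m, (j : ℕ) < (i : ℕ) → MvPolynomial.degreeOf j.succ (g i) < e j)
    (p q : MvPolynomial (Fin (m+1)) ℂ)
    (P Q : Polynomial ℂ)
    (hP : Polynomial.aeval (X 0 : MvPolynomial (Fin (m+1)) ℂ) P = Rnorm e g p)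
    (hQ : Polynomial.aeval (X 0 : MvPolynomial (Fin (m+1)) ℂ) Q = Rnorm e g q)
    (hgcd : IsCoprime P Q) :
    (¬ ∃ a : Fin (m+1) → ℂ,
        (∀ i, eval a (Epoly e g i) = 0) ∧ eval a p = 0 ∧ eval a q = 0) ∧
      Ideal.span (insert p (insert q (Set.range (Epoly e g)))) = ⊤ :=
  stmt9_general m e he g p q P Q hP hQ hgcd

end Radical
end
end

section
/- Let P = (p_1/q_1,…,p_n/q_n) be a radical parametrization such that for each i either (a) p_i, q_i ∈ ℂ[t] with gcd(p_i,q_i) = 1 (a rational component), or (b) q_i = 1 and p_i ∈ ℂ[t,Δ_1,…,Δ_m] with N(p_i) = p_i (a polynomial component). If some rational component satisfies deg(p_i) > deg(q_i), then the image set X(P) is Zariski closed in ℂ^n, i.e. P is surjective. -/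
/-!
`X(P)` is the image under a polynomial map `F` of the variety `V ⊆ ℂ^{m+2}` cut out by
`J = (E_1, …, E_m, u · ∏ q_j - 1)` in the variables `t, Δ, u`. Such an image is the zero set of
`K = F⁻¹(J)` as soon as `ℂ[t,Δ,u]/J` is integral over `ℂ[x]/K`: a point of `V(K)` is a maximal
ideal of `ℂ[x]` containing `K`, and lying over lifts it to a point of `V`. Integrality is checked
on generators: `t` is a root of `P(T) - x_i Q(T)`, which is monic up to a constant because
`deg Q < deg P`; `Δ_k^{e_k} = g_k(t, Δ_1, …, Δ_{k-1})`, by induction on `k`; and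
`u = ∏ (a_i x_i + b_i)` for Bézout relations `a_i p_i + b_i q_i = 1`, since each factor inverts
`q_i` on `V`.
-/

open MvPolynomial
open scoped NNRat

noncomputable section
section Integrality

variable {k R S : Type*} [CommRing R] [CommRing S] [Algebra R S]

theorem isIntegral_aeval_of_forall_mem_vars [CommRing k] [Algebra k R] [Algebra k S]
    [IsScalarTower k R S] {σ : Type*} (y : σ → S) {f : MvPolynomial σ k}
    (h : ∀ v ∈ f.vars, IsIntegral R (y v)) : IsIntegral R (aeval y f) := by
  have hf := mem_supported_vars f
  rw [supported_eq_adjoin_X] at hf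
  refine Algebra.adjoin_le
    (S := ((integralClosure R S).restrictScalars k).comap (aeval y)) ?_ hf
  rintro _ ⟨v, hv, rfl⟩
  simpa [mem_integralClosure_iff] using h v hv

theorem isIntegral_of_mul_prod_eq_one {ι : Type*} [Fintype ι] {u : S} {c d : ι → S}
    (hu : u * ∏ i, c i = 1) (hcd : ∀ i, c i * d i = 1) (hd : ∀ i, IsIntegral R (d i)) :
    IsIntegral R u := by
  have hprod : (∏ i, c i) * ∏ i, d i = 1 := by
    rw [← Finset.prod_mul_distrib]
    exact Finset.prod_eq_one fun i _ => hcd i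
  rw [left_inv_eq_right_inv hu hprod]
  exact IsIntegral.prod _ fun i _ => hd i

theorem isIntegral_of_pow_eq_aeval [CommRing k] [Algebra k R] [Algebra k S]
    [IsScalarTower k R S] {m : ℕ} (y : Fin (m+1) → S) (h0 : IsIntegral R (y 0))
    (e : Fin m → ℕ) (he : ∀ i, e i ≠ 0) (g : Fin m → MvPolynomial (Fin (m+1)) k)
    (hgv : ∀ i, ∀ v ∈ (g i).vars, (v : ℕ) ≤ i) (hy : ∀ i, y i.succ ^ e i = aeval y (g i))
    (v : Fin (m+1)) : IsIntegral R (y v) := by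
  induction v using WellFoundedLT.induction with
  | _ v ih =>
  cases v using Fin.cases with
  | zero => exact h0
  | succ i =>
    refine IsIntegral.of_pow (Nat.pos_of_ne_zero (he i)) ?_
    rw [hy i]
    exact isIntegral_aeval_of_forall_mem_vars y
      fun v hv => ih v (Fin.lt_def.2 (Nat.lt_succ_of_le (hgv i v hv)))

theorem isIntegral_of_aeval_eq_mul_aeval [Field k] [Algebra k R] [Algebra k S]
    [IsScalarTower k R S] {P Q : Polynomial k} (hPQ : Q.degree < P.degree) (r : R) {s : S}
    (h : Polynomial.aeval s P = algebraMap R S r * Polynomial.aeval s Q) : IsIntegral R s := by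
  rcases subsingleton_or_nontrivial R with hR | hR
  · have : Subsingleton S := (algebraMap R S).codomain_trivial
    exact Subsingleton.elim (0 : S) s ▸ isIntegral_zero
  have hP : P ≠ 0 := by rintro rfl; simp at hPQ
  set c := Polynomial.C P.leadingCoeff⁻¹
  refine ⟨(c * P).map (algebraMap k R) - r • (c * Q).map (algebraMap k R), ?_, ?_⟩
  · have hmon : (c * P).Monic :=
      Polynomial.monic_C_mul_of_mul_leadingCoeff_eq_one (inv_mul_cancel₀ (by simpa using hP))
    refine (hmon.map _).sub_of_left ?_
    calc _ ≤ (c * Q).degree := (Polynomial.degree_smul_le _ _).trans Polynomial.degree_map_le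
      _ < (c * P).degree := by simpa [c, hP] using hPQ
      _ = _ := (Polynomial.degree_map_eq_of_injective (algebraMap k R).injective _).symm
  · rw [← Polynomial.aeval_def]
    simp only [Polynomial.map_mul, Algebra.smul_def, Polynomial.algebraMap_eq,
      Polynomial.aeval_sub, map_mul, Polynomial.aeval_map_algebraMap, h, Polynomial.aeval_C]
    ring

end Integrality

section LyingOver

variable {K : Type*} [Field K] {σ τ : Type*}

theorem image_zeroLocus_subset_zeroLocus_comap (φ : MvPolynomial σ K →ₐ[K] MvPolynomial τ K)
    (J : Ideal (MvPolynomial τ K)) :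
    (fun a i => eval a (φ (X i))) '' zeroLocus K J ⊆ zeroLocus K (J.comap φ) := by
  rintro _ ⟨a, ha, rfl⟩ f hf
  have : (aeval a).comp φ = aeval fun i => eval a (φ (X i)) := aeval_unique _
  rw [← this]
  exact ha _ hf

theorem zeroLocus_comap_subset_image_zeroLocus [IsAlgClosed K] [Finite τ]
    (φ : MvPolynomial σ K →ₐ[K] MvPolynomial τ K) (J : Ideal (MvPolynomial τ K))
    (hint : ((Ideal.Quotient.mkₐ K J).comp φ).toRingHom.IsIntegral) :
    zeroLocus K (J.comap φ) ⊆ (fun a i => eval a (φ (X i))) '' zeroLocus K J := by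
  intro x hx
  let := ((Ideal.Quotient.mkₐ K J).comp φ).toRingHom.toAlgebra
  have : Algebra.IsIntegral (MvPolynomial σ K) (MvPolynomial τ K ⧸ J) := ⟨hint⟩
  have hker : RingHom.ker (algebraMap (MvPolynomial σ K) (MvPolynomial τ K ⧸ J))
      ≤ RingHom.ker (eval x) :=
    fun f hf => hx f ((Ideal.Quotient.eq_zero_iff_mem (I := J)).1 (RingHom.mem_ker.1 hf))
  have := RingHom.ker_isMaximal_of_surjective (eval x) fun c => ⟨C c, eval_C c⟩
  obtain ⟨Q, hQmax, hQ⟩ := Ideal.exists_ideal_over_maximal_of_isIntegral _ hker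
  obtain ⟨a, ha⟩ := eq_vanishingIdeal_singleton_of_isMaximal K
    (Ideal.comap_isMaximal_of_surjective _ Ideal.Quotient.mk_surjective (K := Q))
  have hmem : ∀ f, Ideal.Quotient.mk J f ∈ Q → eval a f = 0 := fun f hf =>
    (mem_vanishingIdeal_singleton_iff a f).1 (ha ▸ hf)
  refine ⟨a, fun f hf => hmem f (by simp [Ideal.Quotient.eq_zero_iff_mem.2 hf]), ?_⟩
  funext i
  have : X i - C (x i) ∈ Q.comap (algebraMap _ _) := by simp [hQ]
  exact sub_eq_zero.1 (by simpa using hmem _ this)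

end LyingOver

namespace Radical

variable {m n : ℕ} (e : Fin m → ℕ) (g : Fin m → MvPolynomial (Fin (m+1)) ℂ)
  (p q : Fin n → MvPolynomial (Fin (m+1)) ℂ)

/-- The variable `some v` is `t` (for `v = 0`) or `Δ_v`, and `none` is `u`; on the zero set of
this ideal `u · ∏ q_j = 1`, so `graphMap` below, `x_i ↦ p_i · u · ∏_{j ≠ i} q_j`, computes `P`. -/
def graphIdeal : Ideal (MvPolynomial (Option (Fin (m+1))) ℂ) :=
  Ideal.span (Set.range (fun k => rename some (Epoly e g k)) ∪
    {X none * ∏ j, rename some (q j) - 1})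

def graphMap : MvPolynomial (Fin n) ℂ →ₐ[ℂ] MvPolynomial (Option (Fin (m+1))) ℂ :=
  aeval fun i => rename some (p i) * X none * ∏ j ∈ Finset.univ.erase i, rename some (q j)

def graphCoord :
    MvPolynomial (Fin (m+1)) ℂ →ₐ[ℂ] MvPolynomial (Option (Fin (m+1))) ℂ ⧸ graphIdeal e g q :=
  (Ideal.Quotient.mkₐ ℂ _).comp (rename some)

theorem mem_zeroLocus_graphIdeal {a : Option (Fin (m+1)) → ℂ} :
    a ∈ zeroLocus ℂ (graphIdeal e g q) ↔
      (∀ k, eval (a ∘ some) (Epoly e g k) = 0) ∧ a none * ∏ j, eval (a ∘ some) (q j) = 1 := by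
  simp [graphIdeal, zeroLocus_span, eval_rename, sub_eq_zero, and_comm]

theorem eval_graphMap_X {a : Option (Fin (m+1)) → ℂ}
    (ha : a none * ∏ j, eval (a ∘ some) (q j) = 1) (i : Fin n) :
    eval a (graphMap p q (X i)) = eval (a ∘ some) (p i) / eval (a ∘ some) (q i) := by
  have hqi := Finset.prod_ne_zero_iff.1 (right_ne_zero_of_mul_eq_one ha) i (Finset.mem_univ i)
  rw [← Finset.mul_prod_erase _ _ (Finset.mem_univ i)] at ha
  rw [eq_div_iff hqi]
  simp only [graphMap, aeval_X, map_mul, eval_rename, eval_X, map_prod]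
  linear_combination eval (a ∘ some) (p i) * ha

theorem imageSet_eq_image_zeroLocus :
    ImageSet e g p q =
      (fun a i => eval a (graphMap p q (X i))) '' zeroLocus ℂ (graphIdeal e g q) := by
  ext x
  constructor
  · rintro ⟨a, hE, hq, hx⟩
    have hu : (∏ j, eval a (q j))⁻¹ * ∏ j, eval a (q j) = 1 :=
      inv_mul_cancel₀ (Finset.prod_ne_zero_iff.2 fun j _ => hq j)
    refine ⟨fun o => o.elim (∏ j, eval a (q j))⁻¹ a,
      (mem_zeroLocus_graphIdeal e g q).2 ⟨hE, hu⟩, funext fun i => ?_⟩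
    exact (eval_graphMap_X p q hu i).trans (hx i)
  · rintro ⟨a, ha, rfl⟩
    obtain ⟨hE, hu⟩ := (mem_zeroLocus_graphIdeal e g q).1 ha
    exact ⟨a ∘ some, hE,
      fun i => Finset.prod_ne_zero_iff.1 (right_ne_zero_of_mul_eq_one hu) i (Finset.mem_univ i),
      fun i => (eval_graphMap_X p q hu i).symm⟩

theorem mk_X_none_mul_prod_graphCoord :
    Ideal.Quotient.mk (graphIdeal e g q) (X none) * ∏ j, graphCoord e g q (q j) = 1 := by
  have hmem : X none * ∏ j, rename some (q j) - 1 ∈ graphIdeal e g q :=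
    Ideal.subset_span (Or.inr rfl)
  have := Ideal.Quotient.eq_zero_iff_mem.2 hmem
  rwa [map_sub, map_mul, map_prod, map_one, sub_eq_zero] at this

theorem graphCoord_X_succ_pow (k : Fin m) :
    graphCoord e g q (X k.succ) ^ e k = graphCoord e g q (g k) := by
  have hmem : rename some (Epoly e g k) ∈ graphIdeal e g q :=
    Ideal.subset_span (Or.inl ⟨k, rfl⟩)
  have := Ideal.Quotient.eq_zero_iff_mem.2 hmem
  rwa [Epoly, map_sub, map_pow, map_sub, map_pow, sub_eq_zero] at this

theorem mk_graphMap_X_mul_graphCoord (i : Fin n) :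
    Ideal.Quotient.mk (graphIdeal e g q) (graphMap p q (X i)) * graphCoord e g q (q i)
      = graphCoord e g q (p i) := by
  have hu := mk_X_none_mul_prod_graphCoord e g q
  rw [← Finset.mul_prod_erase _ _ (Finset.mem_univ i)] at hu
  have hF : Ideal.Quotient.mk (graphIdeal e g q) (graphMap p q (X i)) = graphCoord e g q (p i)
      * Ideal.Quotient.mk _ (X none) * ∏ j ∈ Finset.univ.erase i, graphCoord e g q (q j) := by
    simp [graphMap, graphCoord]
  rw [hF]
  linear_combination graphCoord e g q (p i) * hu

theorem isIntegral_mk_comp_graphMap (he : ∀ k, e k ≠ 0)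
    (hgv : ∀ i : Fin m, ∀ v ∈ (g i).vars, (v : ℕ) ≤ i)
    (hcop : ∀ i, IsCoprime (p i) (q i)) {i₀ : Fin n} {P Q : Polynomial ℂ}
    (hP : Polynomial.aeval (X 0) P = p i₀) (hQ : Polynomial.aeval (X 0) Q = q i₀)
    (hPQ : Q.degree < P.degree) :
    ((Ideal.Quotient.mkₐ ℂ (graphIdeal e g q)).comp (graphMap p q)).toRingHom.IsIntegral := by
  let := ((Ideal.Quotient.mkₐ ℂ (graphIdeal e g q)).comp (graphMap p q)).toRingHom.toAlgebra
  set ι := graphCoord e g q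
  have hF : ∀ i, algebraMap (MvPolynomial (Fin n) ℂ) _ (X i) * ι (q i) = ι (p i) :=
    mk_graphMap_X_mul_graphCoord e g p q
  have ht : IsIntegral (MvPolynomial (Fin n) ℂ) (ι (X 0)) := by
    refine isIntegral_of_aeval_eq_mul_aeval hPQ (X i₀) ?_
    rw [Polynomial.aeval_algHom_apply, Polynomial.aeval_algHom_apply, hP, hQ]
    exact (hF i₀).symm
  have hX : ∀ v, IsIntegral (MvPolynomial (Fin n) ℂ) (ι (X v)) :=
    isIntegral_of_pow_eq_aeval (ι ∘ X) ht e he g hgv fun k => by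
      rw [Function.comp_apply, graphCoord_X_succ_pow, ← aeval_unique]
  have hcoord : ∀ f, IsIntegral (MvPolynomial (Fin n) ℂ) (ι f) := fun f => by
    rw [aeval_unique ι]
    exact isIntegral_aeval_of_forall_mem_vars _ fun v _ => hX v
  have hu :
      IsIntegral (MvPolynomial (Fin n) ℂ) (Ideal.Quotient.mk (graphIdeal e g q) (X none)) := by
    choose a b hab using hcop
    refine isIntegral_of_mul_prod_eq_one (mk_X_none_mul_prod_graphCoord e g q)
      (d := fun i => ι (a i) * algebraMap (MvPolynomial (Fin n) ℂ) _ (X i) + ι (b i))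
      (fun i => ?_) fun i => ((hcoord _).mul isIntegral_algebraMap).add (hcoord _)
    have hab' := congrArg ι (hab i)
    rw [map_add, map_mul, map_mul, map_one] at hab'
    linear_combination ι (a i) * hF i + hab'
  suffices ∀ s, IsIntegral (MvPolynomial (Fin n) ℂ) s from this
  intro s
  obtain ⟨f, rfl⟩ := Ideal.Quotient.mk_surjective s
  rw [← Ideal.Quotient.mkₐ_eq_mk ℂ, aeval_unique (Ideal.Quotient.mkₐ ℂ _)]
  refine isIntegral_aeval_of_forall_mem_vars _ fun o _ => ?_
  cases o with
  | none => exact hu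
  | some v => simpa [ι, graphCoord] using hX v

theorem stmt14_general
    (m n : ℕ) (e : Fin m → ℕ) (he : ∀ i, 2 ≤ e i)
    (g : Fin m → MvPolynomial (Fin (m+1)) ℂ)
    (hgv : ∀ i : Fin m, ∀ v ∈ (g i).vars, (v : ℕ) ≤ (i : ℕ))
    (p q : Fin n → MvPolynomial (Fin (m+1)) ℂ)
    (hcomp : ∀ i,
      (∃ P Q : Polynomial ℂ, IsCoprime P Q ∧
        Polynomial.aeval (X 0 : MvPolynomial (Fin (m+1)) ℂ) P = p i ∧
        Polynomial.aeval (X 0 : MvPolynomial (Fin (m+1)) ℂ) Q = q i) ∨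
      (q i = 1 ∧ IsNormalForm e (p i)))
    (hdeg : ∃ (i : Fin n) (P Q : Polynomial ℂ), IsCoprime P Q ∧
      Polynomial.aeval (X 0 : MvPolynomial (Fin (m+1)) ℂ) P = p i ∧
      Polynomial.aeval (X 0 : MvPolynomial (Fin (m+1)) ℂ) Q = q i ∧
      Q.degree < P.degree) :
    IsZariskiClosed (ImageSet e g p q) := by
  obtain ⟨i₀, P, Q, -, hP, hQ, hPQ⟩ := hdeg
  have hcop : ∀ i, IsCoprime (p i) (q i) := fun i => by
    rcases hcomp i with ⟨P, Q, hPQ, hP, hQ⟩ | ⟨hq, -⟩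
    · exact hP ▸ hQ ▸ hPQ.map (Polynomial.aeval (X 0)).toRingHom
    · exact hq ▸ isCoprime_one_right
  have hint := isIntegral_mk_comp_graphMap e g p q (fun i => Nat.ne_zero_of_lt (he i)) hgv
    hcop hP hQ hPQ
  refine ⟨(graphIdeal e g q).comap (graphMap p q), ?_⟩
  rw [imageSet_eq_image_zeroLocus]
  exact (image_zeroLocus_subset_zeroLocus_comap _ _).antisymm
    (zeroLocus_comap_subset_image_zeroLocus _ _ hint)

/-- Let `P = (p₁/q₁,…,p_n/q_n)` be a radical parametrization such that each component is
either (a) rational, i.e. `p_i, q_i ∈ ℂ[t]` (embedded via `t ↦ X 0`) with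
`gcd(p_i,q_i) = 1`, or (b) polynomial, i.e. `q_i = 1` and `N(p_i) = p_i`. If some rational
component satisfies `deg p_i > deg q_i`, then `X(P)` is Zariski closed in `ℂⁿ`. -/
theorem stmt14
    (m n : ℕ) (hm : 1 ≤ m) (e : Fin m → ℕ) (he : ∀ i, 2 ≤ e i)
    (g : Fin m → MvPolynomial (Fin (m+1)) ℂ)
    (hgv : ∀ i : Fin m, ∀ v ∈ (g i).vars, (v : ℕ) ≤ (i : ℕ))
    (hgd : ∀ i j : Fin m, (j : ℕ) < (i : ℕ) → MvPolynomial.degreeOf j.succ (g i) < e j)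
    (p q : Fin n → MvPolynomial (Fin (m+1)) ℂ) (hq : ∀ i, q i ≠ 0)
    (hcomp : ∀ i,
      (∃ P Q : Polynomial ℂ, IsCoprime P Q ∧
        Polynomial.aeval (X 0 : MvPolynomial (Fin (m+1)) ℂ) P = p i ∧
        Polynomial.aeval (X 0 : MvPolynomial (Fin (m+1)) ℂ) Q = q i) ∨
      (q i = 1 ∧ IsNormalForm e (p i)))
    (hdeg : ∃ (i : Fin n) (P Q : Polynomial ℂ), IsCoprime P Q ∧
      Polynomial.aeval (X 0 : MvPolynomial (Fin (m+1)) ℂ) P = p i ∧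
      Polynomial.aeval (X 0 : MvPolynomial (Fin (m+1)) ℂ) Q = q i ∧
      Q.degree < P.degree) :
    IsZariskiClosed (ImageSet e g p q) :=
  stmt14_general m n e he g hgv p q hcomp hdeg

end Radical
end
end

section
/- Let p_1,…,p_n, q_1,…,q_n ∈ ℂ[t] with q_i ≠ 0 and gcd(p_i, q_i) = 1 for every i, and suppose there exists i_0 such that deg(p_{i_0}) > deg(q_{i_0}). Then the image set {(p_1(t)/q_1(t),…,p_n(t)/q_n(t)) : t ∈ ℂ, q_i(t) ≠ 0 for all i} is Zariski closed in ℂ^n; that is, the rational parametrization (p_1/q_1,…,p_n/q_n) is surjective. -/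
/-! Let `J ⊆ ℂ[x][t]` be generated by the relations `pᵢ(t) - xᵢ qᵢ(t)`. A point `x` lies in the
image iff the specialised relations `pᵢ - xᵢ qᵢ ∈ ℂ[t]` have a common root (coprimality keeps
the denominators nonzero there), and the image is cut out by the elimination ideal `J ∩ ℂ[x]`.
The nontrivial inclusion: as `deg p_{i₀} > deg q_{i₀}`, the `i₀`-th relation has a constant
leading coefficient, so `ℂ[x][t]/J` is integral over `ℂ[x]`. By lying over, a maximal ideal
`𝔪ₓ ⊇ J ∩ ℂ[x]` is the contraction of a prime `Q ⊇ J`, whose image in `ℂ[x][t]/𝔪ₓ[t] = ℂ[t]` is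
a proper ideal containing the specialised relations; a root of its generator is a common root. -/

open Polynomial

/-- A subset of `ℂⁿ` is Zariski closed if it is the common zero locus of a family of
polynomials in `n` complex variables. -/
def IsZariskiClosed {n : ℕ} (S : Set (Fin n → ℂ)) : Prop :=
  ∃ T : Set (MvPolynomial (Fin n) ℂ), S = {x | ∀ p ∈ T, MvPolynomial.eval x p = 0}

namespace Polynomial

theorem exists_isPrime_ge_comap_C_eq {R : Type*} [CommRing R] {J : Ideal R[X]} {G : R[X]}
    (hG : G.Monic) (hGJ : G ∈ J) (P : Ideal R) [P.IsPrime] (hJP : J.comap C ≤ P) :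
    ∃ Q : Ideal R[X], Q.IsPrime ∧ J ≤ Q ∧ Q.comap C = P := by
  have : Algebra.IsIntegral R (R[X] ⧸ J) := ⟨hG.quotient_isIntegral hGJ⟩
  have hker : RingHom.ker (algebraMap R (R[X] ⧸ J)) = J.comap C := by
    rw [IsScalarTower.algebraMap_eq R R[X], Ideal.Quotient.algebraMap_eq, algebraMap_eq,
      ← RingHom.comap_ker, Ideal.mk_ker]
  obtain ⟨Q, -, hQ, hQP⟩ := Ideal.exists_ideal_over_prime_of_isIntegral P (⊥ : Ideal (R[X] ⧸ J))
    (by rwa [← RingHom.ker_eq_comap_bot, hker])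
  refine ⟨Q.comap (Ideal.Quotient.mk J), Ideal.comap_isPrime _ _, fun g hg => ?_, hQP⟩
  rw [Ideal.mem_comap, Ideal.Quotient.eq_zero_iff_mem.mpr hg]
  exact Q.zero_mem

theorem exists_eval_eq_zero_of_ne_top {k : Type*} [Field k] [IsAlgClosed k] {I : Ideal k[X]}
    (hI : I ≠ ⊤) : ∃ t, ∀ f ∈ I, f.eval t = 0 := by
  obtain ⟨g, rfl⟩ := (IsPrincipalIdealRing.principal I).principal
  have hg : g.degree ≠ 0 := fun h =>
    hI (Ideal.span_singleton_eq_top.mpr (isUnit_iff_degree_eq_zero.mpr h))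
  obtain ⟨t, ht⟩ := IsAlgClosed.exists_root g hg
  exact ⟨t, fun f hf => (ht.dvd (Ideal.mem_span_singleton.mp hf))⟩

/-- The extension theorem of elimination theory, for an ideal containing a monic polynomial. -/
theorem exists_eval_map_eq_zero_of_comap_C_le_ker {R k : Type*} [CommRing R] [Field k]
    [IsAlgClosed k] {J : Ideal R[X]} {G : R[X]} (hG : G.Monic) (hGJ : G ∈ J) {φ : R →+* k}
    (hφ : Function.Surjective φ) (hJφ : J.comap C ≤ RingHom.ker φ) :
    ∃ t, ∀ g ∈ J, (g.map φ).eval t = 0 := by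
  have := RingHom.ker_isPrime φ
  obtain ⟨Q, hQ, hJQ, hQφ⟩ := exists_isPrime_ge_comap_C_eq hG hGJ (RingHom.ker φ) hJφ
  have hker : RingHom.ker (mapRingHom φ) ≤ Q := by
    rw [ker_mapRingHom, ← hQφ]
    exact Ideal.map_comap_le
  have := Ideal.map_isPrime_of_surjective (map_surjective φ hφ) hker
  obtain ⟨t, ht⟩ := exists_eval_eq_zero_of_ne_top this.ne_top
  exact ⟨t, fun g hg => ht _ (Ideal.mem_map_of_mem _ (hJQ hg))⟩

theorem eval_ne_zero_of_isCoprime {k : Type*} [CommRing k] [Nontrivial k] {p q : k[X]}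
    (hpq : IsCoprime p q) {t a : k} (h : p.eval t = a * q.eval t) : q.eval t ≠ 0 := by
  intro hq
  have := hpq.map (evalRingHom t)
  simp only [coe_evalRingHom, h, hq, mul_zero, isCoprime_zero_left, isUnit_zero_iff] at this
  exact zero_ne_one this

end Polynomial

noncomputable section Parametrization

variable {σ k : Type*} [CommRing k] (p q : σ → k[X])

def parametrizationRelation (i : σ) : (MvPolynomial σ k)[X] :=
  (p i).map MvPolynomial.C - C (MvPolynomial.X i) * (q i).map MvPolynomial.C

def parametrizationIdeal : Ideal (MvPolynomial σ k)[X] :=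
  Ideal.span (Set.range (parametrizationRelation p q))

theorem map_eval_parametrizationRelation (x : σ → k) (i : σ) :
    (parametrizationRelation p q i).map (MvPolynomial.eval x) = p i - C (x i) * q i := by
  have hx : (MvPolynomial.eval x).comp MvPolynomial.C = RingHom.id k :=
    RingHom.ext MvPolynomial.eval_C
  simp [parametrizationRelation, Polynomial.map_map, hx]

theorem forall_mem_parametrizationIdeal_eval_map_eq_zero_iff (x : σ → k) (t : k) :
    (∀ g ∈ parametrizationIdeal p q, (g.map (MvPolynomial.eval x)).eval t = 0) ↔
      ∀ i, (p i).eval t = x i * (q i).eval t := by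
  let ψ := (evalRingHom t).comp (mapRingHom (MvPolynomial.eval x))
  have hψ : ∀ i, ψ (parametrizationRelation p q i) = (p i).eval t - x i * (q i).eval t := by
    intro i
    simp [ψ, map_eval_parametrizationRelation]
  change parametrizationIdeal p q ≤ RingHom.ker ψ ↔ _
  simp only [parametrizationIdeal, Ideal.span_le, Set.range_subset_iff, SetLike.mem_coe,
    RingHom.mem_ker, hψ, sub_eq_zero]

theorem leadingCoeff_parametrizationRelation [Nontrivial k] {i : σ}
    (hdeg : (q i).degree < (p i).degree) :
    (parametrizationRelation p q i).leadingCoeff = MvPolynomial.C (p i).leadingCoeff := by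
  have hC := MvPolynomial.C_injective σ k
  have hlt : (C (MvPolynomial.X i) * (q i).map MvPolynomial.C).degree
      < ((p i).map (MvPolynomial.C (σ := σ))).degree := by
    calc _ ≤ ((q i).map (MvPolynomial.C (σ := σ))).degree := by
          rw [← smul_eq_C_mul]; exact degree_smul_le ..
      _ < _ := by rwa [degree_map_eq_of_injective hC, degree_map_eq_of_injective hC]
  rw [parametrizationRelation, leadingCoeff_sub_of_degree_lt hlt,
    leadingCoeff_map_of_injective hC]

end Parametrization

theorem exists_monic_mem_parametrizationIdeal {σ k : Type*} [Field k] {p q : σ → k[X]} {i : σ}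
    (hdeg : (q i).degree < (p i).degree) :
    ∃ G ∈ parametrizationIdeal p q, G.Monic := by
  have hp : (p i).leadingCoeff ≠ 0 := leadingCoeff_ne_zero.mpr (ne_zero_of_degree_gt hdeg)
  refine ⟨C (MvPolynomial.C (p i).leadingCoeff⁻¹) * parametrizationRelation p q i,
    Ideal.mul_mem_left _ _ (Ideal.subset_span ⟨i, rfl⟩), ?_⟩
  refine monic_C_mul_of_mul_leadingCoeff_eq_one ?_
  rw [leadingCoeff_parametrizationRelation p q hdeg, ← map_mul, inv_mul_cancel₀ hp, map_one]

theorem stmt15_general (n : ℕ) (p q : Fin n → Polynomial ℂ)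
    (hcop : ∀ i, IsCoprime (p i) (q i)) (i₀ : Fin n)
    (hdeg : (q i₀).degree < (p i₀).degree) :
    IsZariskiClosed
      {x : Fin n → ℂ | ∃ t : ℂ, (∀ i, (q i).eval t ≠ 0) ∧
        ∀ i, (p i).eval t / (q i).eval t = x i} := by
  refine ⟨{f | C f ∈ parametrizationIdeal p q}, Set.ext fun x => ⟨?_, fun hx => ?_⟩⟩
  · rintro ⟨t, hqt, hx⟩ f hf
    have hroot := (forall_mem_parametrizationIdeal_eval_map_eq_zero_iff p q x t).mpr
      fun i => by rw [← hx i, div_mul_cancel₀ _ (hqt i)]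
    simpa using hroot _ hf
  · obtain ⟨G, hGJ, hG⟩ := exists_monic_mem_parametrizationIdeal hdeg
    obtain ⟨t, ht⟩ := exists_eval_map_eq_zero_of_comap_C_le_ker hG hGJ
      (φ := MvPolynomial.eval x) (fun c => ⟨MvPolynomial.C c, MvPolynomial.eval_C c⟩) hx
    have hpq := (forall_mem_parametrizationIdeal_eval_map_eq_zero_iff p q x t).mp ht
    have hqt i : (q i).eval t ≠ 0 := eval_ne_zero_of_isCoprime (hcop i) (hpq i)
    exact ⟨t, hqt, fun i => by rw [hpq i, mul_div_cancel_right₀ _ (hqt i)]⟩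

/-- Let `p₁,…,p_n, q₁,…,q_n ∈ ℂ[t]` with `q_i ≠ 0` and `gcd(p_i,q_i) = 1` for every `i`,
and suppose `deg p_{i₀} > deg q_{i₀}` for some `i₀`. Then the image of the rational
parametrization `t ↦ (p₁(t)/q₁(t), …, p_n(t)/q_n(t))` is Zariski closed in `ℂⁿ`. -/
theorem stmt15 (n : ℕ) (p q : Fin n → Polynomial ℂ) (hq : ∀ i, q i ≠ 0)
    (hcop : ∀ i, IsCoprime (p i) (q i)) (i₀ : Fin n)
    (hdeg : (q i₀).degree < (p i₀).degree) :
    IsZariskiClosed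
      {x : Fin n → ℂ | ∃ t : ℂ, (∀ i, (q i).eval t ≠ 0) ∧
        ∀ i, (p i).eval t / (q i).eval t = x i} :=
  stmt15_general n p q hcop i₀ hdeg
end
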